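/- arXiv:2603.06743 — 2 statements merged into one kernel-verified Lean document; each statement's English description precedes it below -/
import Mathlib

section
/- Let f : ℝ^d → ℝ be differentiable with L-Lipschitz gradient on the segment from θ to θ' = θ − ηv + δ, where v = ∇f(θ), η > 0, and ‖δ‖ ≤ λη‖v‖ for some λ ∈ [0,1). Then f(θ) − f(θ') ≥ η‖v‖²((1−λ) − (L/2)(1+λ)²η). In particular, if η ≤ (1−λ)/(L(1+λ)²), then f(θ) − f(θ') ≥ ((1−λ)/2)η‖v‖². -/
open Real

section Aux

variable {E : Type*} [NormedAddCommGroup E] [InnerProductSpace ℝ E] [CompleteSpace E]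

/-- Descent lemma: quadratic upper bound for a function with Lipschitz gradient
on the segment from `x` to `y`. -/
theorem descent_lemma_aux (f : E → ℝ) (f' : E → E) (x y : E) (L : ℝ) (hL : 0 ≤ L)
    (hdiff : ∀ z ∈ segment ℝ x y, HasGradientAt f (f' z) z)
    (hlip : ∀ z ∈ segment ℝ x y, ∀ w ∈ segment ℝ x y, ‖f' z - f' w‖ ≤ L * ‖z - w‖) :
    f y ≤ f x + inner ℝ (f' x) (y - x) + L / 2 * ‖y - x‖ ^ 2 := by
  set u := y - x with hu
  have hseg : ∀ t ∈ Set.Icc (0:ℝ) 1, x + t • u ∈ segment ℝ x y := by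
    intro t ht
    rw [segment_eq_image']
    exact ⟨t, ht, rfl⟩
  have hxseg : x ∈ segment ℝ x y := left_mem_segment ℝ x y
  -- derivative of φ t = f (x + t • u)
  have hderiv : ∀ t ∈ Set.Icc (0:ℝ) 1,
      HasDerivAt (fun s : ℝ => f (x + s • u)) (inner ℝ (f' (x + t • u)) u) t := by
    intro t ht
    have hγ : HasDerivAt (fun s : ℝ => x + s • u) u t := by
      simpa using ((hasDerivAt_id t).smul_const u).const_add x
    have hf := (hdiff _ (hseg t ht)).hasFDerivAt
    have := hf.comp_hasDerivAt t hγ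
    simpa [Function.comp_def] using this
  -- continuity of the derivative
  have hcont : ContinuousOn (fun t : ℝ => (inner ℝ (f' (x + t • u)) u : ℝ)) (Set.Icc 0 1) := by
    have hlipOn : LipschitzOnWith (Real.toNNReal (L * ‖u‖ * ‖u‖))
        (fun t : ℝ => (inner ℝ (f' (x + t • u)) u : ℝ)) (Set.Icc 0 1) := by
      rw [lipschitzOnWith_iff_dist_le_mul]
      intro s hs t ht
      have h1 : dist (inner ℝ (f' (x + s • u)) u : ℝ) (inner ℝ (f' (x + t • u)) u) ≤
          ‖f' (x + s • u) - f' (x + t • u)‖ * ‖u‖ := by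
        rw [dist_eq_norm]
        have : (inner ℝ (f' (x + s • u)) u : ℝ) - inner ℝ (f' (x + t • u)) u =
            inner ℝ (f' (x + s • u) - f' (x + t • u)) u := by
          rw [inner_sub_left]
        rw [this]
        exact norm_inner_le_norm _ _
      have h2 : ‖f' (x + s • u) - f' (x + t • u)‖ ≤ L * (dist s t * ‖u‖) := by
        have := hlip _ (hseg s hs) _ (hseg t ht)
        have heq : ‖x + s • u - (x + t • u)‖ = dist s t * ‖u‖ := by
          have : x + s • u - (x + t • u) = (s - t) • u := by
            rw [sub_smul]; abel
          rw [this, norm_smul, Real.dist_eq, Real.norm_eq_abs]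
        rwa [heq] at this
      calc dist (inner ℝ (f' (x + s • u)) u : ℝ) (inner ℝ (f' (x + t • u)) u)
          ≤ ‖f' (x + s • u) - f' (x + t • u)‖ * ‖u‖ := h1
        _ ≤ L * (dist s t * ‖u‖) * ‖u‖ := by
            apply mul_le_mul_of_nonneg_right h2 (norm_nonneg _)
        _ ≤ Real.toNNReal (L * ‖u‖ * ‖u‖) * dist s t := by
            rw [Real.coe_toNNReal _ (by positivity)]; ring_nf; rfl
    exact hlipOn.continuousOn
  have hint : IntervalIntegrable (fun t : ℝ => (inner ℝ (f' (x + t • u)) u : ℝ))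
      MeasureTheory.volume 0 1 := by
    apply ContinuousOn.intervalIntegrable
    rwa [Set.uIcc_of_le zero_le_one]
  -- FTC
  have hftc : ∫ t in (0:ℝ)..1, (inner ℝ (f' (x + t • u)) u : ℝ) = f y - f x := by
    have := intervalIntegral.integral_eq_sub_of_hasDerivAt
      (f := fun s : ℝ => f (x + s • u))
      (f' := fun t : ℝ => (inner ℝ (f' (x + t • u)) u : ℝ))
      (by intro t ht; exact hderiv t (by rwa [Set.uIcc_of_le zero_le_one] at ht)) hint
    simpa [hu] using this
  -- bound the integral
  have hbound : ∫ t in (0:ℝ)..1, (inner ℝ (f' (x + t • u)) u : ℝ) ≤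
      ∫ t in (0:ℝ)..1, (inner ℝ (f' x) u + L * t * ‖u‖ ^ 2 : ℝ) := by
    apply intervalIntegral.integral_mono_on zero_le_one hint
    · apply Continuous.intervalIntegrable; continuity
    · intro t ht
      have key : (inner ℝ (f' (x + t • u)) u : ℝ) - inner ℝ (f' x) u ≤ L * t * ‖u‖ ^ 2 := by
        have h1 : (inner ℝ (f' (x + t • u)) u : ℝ) - inner ℝ (f' x) u =
            inner ℝ (f' (x + t • u) - f' x) u := by rw [inner_sub_left]
        rw [h1]
        calc (inner ℝ (f' (x + t • u) - f' x) u : ℝ)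
            ≤ ‖f' (x + t • u) - f' x‖ * ‖u‖ := real_inner_le_norm _ _
          _ ≤ L * ‖x + t • u - x‖ * ‖u‖ := by
              apply mul_le_mul_of_nonneg_right _ (norm_nonneg _)
              exact hlip _ (hseg t ht) _ hxseg
          _ = L * t * ‖u‖ ^ 2 := by
              have : x + t • u - x = t • u := by abel
              rw [this, norm_smul, Real.norm_eq_abs, abs_of_nonneg ht.1]
              ring
      linarith
  have hval : ∫ t in (0:ℝ)..1, (inner ℝ (f' x) u + L * t * ‖u‖ ^ 2 : ℝ) =
      inner ℝ (f' x) u + L / 2 * ‖u‖ ^ 2 := by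
    rw [intervalIntegral.integral_add (by apply Continuous.intervalIntegrable; continuity)
      (by apply Continuous.intervalIntegrable; continuity)]
    have heq : (fun t : ℝ => L * t * ‖u‖ ^ 2) = fun t : ℝ => (L * ‖u‖ ^ 2) * t := by
      funext t; ring
    rw [heq, intervalIntegral.integral_const_mul, integral_id,
      intervalIntegral.integral_const]
    simp
    ring
  have := hftc ▸ (hval ▸ hbound)
  linarith

end Aux

/-- One-step decrease of an `L`-smooth function under a perturbed gradient step
`θ' = θ - η v + δ` with `‖δ‖ ≤ λ η ‖v‖`, `λ ∈ [0,1)`. -/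
theorem perturbed_gradient_step_decrease {d : ℕ}
    (f : EuclideanSpace ℝ (Fin d) → ℝ)
    (f' : EuclideanSpace ℝ (Fin d) → EuclideanSpace ℝ (Fin d))
    (θ θ' v δ : EuclideanSpace ℝ (Fin d)) (η L lam : ℝ)
    (hη : 0 < η) (hL : 0 ≤ L) (hlam0 : 0 ≤ lam) (hlam1 : lam < 1)
    (hv : v = f' θ) (hθ' : θ' = θ - η • v + δ) (hδ : ‖δ‖ ≤ lam * η * ‖v‖)
    (hdiff : ∀ x ∈ segment ℝ θ θ', HasGradientAt f (f' x) x)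
    (hlip : ∀ x ∈ segment ℝ θ θ', ∀ y ∈ segment ℝ θ θ',
      ‖f' x - f' y‖ ≤ L * ‖x - y‖) :
    f θ - f θ' ≥ η * ‖v‖ ^ 2 * ((1 - lam) - L / 2 * (1 + lam) ^ 2 * η) ∧
    (η ≤ (1 - lam) / (L * (1 + lam) ^ 2) →
      f θ - f θ' ≥ (1 - lam) / 2 * η * ‖v‖ ^ 2) := by
  have hkey := descent_lemma_aux f f' θ θ' L hL hdiff hlip
  have hu : θ' - θ = -(η • v) + δ := by rw [hθ']; abel
  have hinner : (inner ℝ (f' θ) (θ' - θ) : ℝ) ≤ -(η * ‖v‖ ^ 2) + lam * η * ‖v‖ ^ 2 := by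
    rw [hu, inner_add_right, inner_neg_right, real_inner_smul_right, ← hv,
      real_inner_self_eq_norm_sq]
    have h1 : (inner ℝ v δ : ℝ) ≤ ‖v‖ * ‖δ‖ := real_inner_le_norm _ _
    have h2 : ‖v‖ * ‖δ‖ ≤ ‖v‖ * (lam * η * ‖v‖) :=
      mul_le_mul_of_nonneg_left hδ (norm_nonneg _)
    nlinarith [norm_nonneg v]
  have hnorm : ‖θ' - θ‖ ≤ (1 + lam) * η * ‖v‖ := by
    rw [hu]
    calc ‖-(η • v) + δ‖ ≤ ‖-(η • v)‖ + ‖δ‖ := norm_add_le _ _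
      _ = η * ‖v‖ + ‖δ‖ := by rw [norm_neg, norm_smul, Real.norm_eq_abs, abs_of_pos hη]
      _ ≤ η * ‖v‖ + lam * η * ‖v‖ := by linarith
      _ = (1 + lam) * η * ‖v‖ := by ring
  have hnormsq : ‖θ' - θ‖ ^ 2 ≤ ((1 + lam) * η * ‖v‖) ^ 2 := by
    apply sq_le_sq' _ hnorm
    have := norm_nonneg (θ' - θ)
    nlinarith
  have hmain : f θ - f θ' ≥ η * ‖v‖ ^ 2 * ((1 - lam) - L / 2 * (1 + lam) ^ 2 * η) := by
    have h3 : L / 2 * ‖θ' - θ‖ ^ 2 ≤ L / 2 * ((1 + lam) * η * ‖v‖) ^ 2 := by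
      apply mul_le_mul_of_nonneg_left hnormsq (by linarith)
    nlinarith [hkey, hinner]
  refine ⟨hmain, fun hsmall => ?_⟩
  have hcoef : L / 2 * (1 + lam) ^ 2 * η ≤ (1 - lam) / 2 := by
    rcases eq_or_lt_of_le hL with hL0 | hLpos
    · rw [← hL0]; linarith
    · have hden : 0 < L * (1 + lam) ^ 2 := by positivity
      rw [le_div_iff₀ hden] at hsmall
      nlinarith
  have : η * ‖v‖ ^ 2 * ((1 - lam) - L / 2 * (1 + lam) ^ 2 * η) ≥
      (1 - lam) / 2 * η * ‖v‖ ^ 2 := by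
    have h4 : (1 - lam) - L / 2 * (1 + lam) ^ 2 * η ≥ (1 - lam) / 2 := by linarith
    have h5 : 0 ≤ η * ‖v‖ ^ 2 := by positivity
    have h6 := mul_le_mul_of_nonneg_left h4 h5
    linarith
  linarith
end

section
/- Let f : ℝ^d → ℝ be differentiable with L-Lipschitz gradient on the segment from θ to θ' = θ − ηv + δ. Let u = ∇f(θ), and suppose γ := −⟨u, v⟩ > 0, ‖δ‖ ≤ λη‖v‖ with λ ∈ [0,1), and η ≤ γ/((1+λ)²L‖v‖²). Then f(θ') − f(θ) ≥ η(γ/2 − λ‖u‖‖v‖). -/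
open Real

lemma descent_lb {d : ℕ} (f : EuclideanSpace ℝ (Fin d) → ℝ)
    (f' : EuclideanSpace ℝ (Fin d) → EuclideanSpace ℝ (Fin d))
    (θ θ' : EuclideanSpace ℝ (Fin d)) (L : ℝ) (hL : 0 ≤ L)
    (hdiff : ∀ x ∈ segment ℝ θ θ', HasGradientAt f (f' x) x)
    (hlip : ∀ x ∈ segment ℝ θ θ', ‖f' x - f' θ‖ ≤ L * ‖x - θ‖) :
    f θ' - f θ ≥ (inner ℝ (f' θ) (θ' - θ) : ℝ) - L / 2 * ‖θ' - θ‖ ^ 2 := by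
  set w := θ' - θ with hw
  set iuw : ℝ := inner ℝ (f' θ) w with hiuw
  set ψ : ℝ → ℝ := fun t => f (θ + t • w) - t * iuw + L / 2 * t ^ 2 * ‖w‖ ^ 2 with hψ
  have hmem : ∀ t ∈ Set.Icc (0:ℝ) 1, θ + t • w ∈ segment ℝ θ θ' := by
    intro t ht
    rw [segment_eq_image']
    exact ⟨t, ht, rfl⟩
  have hder : ∀ t ∈ Set.Icc (0:ℝ) 1, HasDerivAt ψ
      ((inner ℝ (f' (θ + t • w)) w : ℝ) - iuw + L * t * ‖w‖ ^ 2) t := by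
    intro t ht
    have hx := (hdiff _ (hmem t ht)).hasFDerivAt
    have hline : HasDerivAt (fun s : ℝ => θ + s • w) w t := by
      simpa using ((hasDerivAt_id t).smul_const w).const_add θ
    have hcomp : HasDerivAt (fun s : ℝ => f (θ + s • w))
        ((inner ℝ (f' (θ + t • w)) w : ℝ)) t := by
      have := hx.comp_hasDerivAt t hline
      simp at this
      exact this
    have h2 : HasDerivAt (fun s : ℝ => s * iuw) iuw t := by
      simpa using (hasDerivAt_id t).mul_const iuw
    have h3 : HasDerivAt (fun s : ℝ => L / 2 * s ^ 2 * ‖w‖ ^ 2)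
        (L * t * ‖w‖ ^ 2) t := by
      have := ((hasDerivAt_pow 2 t).const_mul (L / 2)).mul_const (‖w‖ ^ 2)
      exact this.congr_deriv (by rw [show (2:ℕ) - 1 = 1 from rfl, pow_one]; push_cast; ring)
    exact (hcomp.sub h2).add h3
  have hmono : MonotoneOn ψ (Set.Icc (0:ℝ) 1) := by
    apply monotoneOn_of_deriv_nonneg (convex_Icc 0 1)
    · intro t ht
      exact (hder t ht).continuousAt.continuousWithinAt
    · intro t ht
      rw [interior_Icc] at ht
      exact (hder t (Set.mem_Icc_of_Ioo ht)).differentiableAt.differentiableWithinAt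
    · intro t ht
      rw [interior_Icc] at ht
      rw [(hder t (Set.mem_Icc_of_Ioo ht)).deriv]
      have ht0 : 0 ≤ t := le_of_lt ht.1
      have hxseg := hmem t (Set.mem_Icc_of_Ioo ht)
      have hlipx := hlip _ hxseg
      have hnx : ‖θ + t • w - θ‖ = t * ‖w‖ := by
        simp [norm_smul, abs_of_nonneg ht0]
      rw [hnx] at hlipx
      have hinner : (inner ℝ (f' (θ + t • w)) w : ℝ) - iuw
          = inner ℝ (f' (θ + t • w) - f' θ) w := by
        rw [inner_sub_left]
      have hbound : -(L * (t * ‖w‖) * ‖w‖) ≤ (inner ℝ (f' (θ + t • w) - f' θ) w : ℝ) := by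
        have h1 : |(inner ℝ (f' (θ + t • w) - f' θ) w : ℝ)| ≤ ‖f' (θ + t • w) - f' θ‖ * ‖w‖ :=
          abs_real_inner_le_norm _ _
        nlinarith [abs_nonneg ((inner ℝ (f' (θ + t • w) - f' θ) w : ℝ)), neg_abs_le ((inner ℝ (f' (θ + t • w) - f' θ) w : ℝ)), norm_nonneg w, mul_le_mul_of_nonneg_right hlipx (norm_nonneg w)]
      rw [hinner]
      nlinarith [hbound]
  have h01 := hmono (Set.left_mem_Icc.mpr zero_le_one) (Set.right_mem_Icc.mpr zero_le_one) zero_le_one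
  simp only [hψ] at h01
  norm_num at h01
  rw [show θ + w = θ' by simp [hw]] at h01
  linarith

/-- Cross-sample amplification: a perturbed gradient step along `-v` increases the
value of a smooth function `f` whose gradient `u` at `θ` is anti-aligned with `v`. -/
theorem cross_sample_amplification {d : ℕ}
    (f : EuclideanSpace ℝ (Fin d) → ℝ)
    (f' : EuclideanSpace ℝ (Fin d) → EuclideanSpace ℝ (Fin d))
    (θ θ' v δ u : EuclideanSpace ℝ (Fin d)) (η L lam γ : ℝ)
    (hη : 0 < η) (hL : 0 ≤ L) (hlam0 : 0 ≤ lam) (hlam1 : lam < 1)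
    (hu : u = f' θ) (hγ : γ = -(inner ℝ u v : ℝ)) (hγpos : 0 < γ)
    (hθ' : θ' = θ - η • v + δ) (hδ : ‖δ‖ ≤ lam * η * ‖v‖)
    (hηsmall : η ≤ γ / ((1 + lam) ^ 2 * L * ‖v‖ ^ 2))
    (hdiff : ∀ x ∈ segment ℝ θ θ', HasGradientAt f (f' x) x)
    (hlip : ∀ x ∈ segment ℝ θ θ', ∀ y ∈ segment ℝ θ θ',
      ‖f' x - f' y‖ ≤ L * ‖x - y‖) :
    f θ' - f θ ≥ η * (γ / 2 - lam * ‖u‖ * ‖v‖) := by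
  have hvpos : 0 < ‖v‖ := by
    rcases eq_or_ne v 0 with rfl | hv
    · simp at hγ; rw [hγ] at hγpos; exact absurd hγpos (lt_irrefl 0)
    · exact norm_pos_iff.mpr hv
  have hLpos : 0 < L := by
    rcases lt_or_eq_of_le hL with h | h
    · exact h
    · exfalso
      rw [← h] at hηsmall
      have hz : (1 + lam) ^ 2 * (0:ℝ) * ‖v‖ ^ 2 = 0 := by ring
      rw [hz, div_zero] at hηsmall
      linarith
  have hdenpos : 0 < (1 + lam) ^ 2 * L * ‖v‖ ^ 2 := by positivity
  have hηγ : η * ((1 + lam) ^ 2 * L * ‖v‖ ^ 2) ≤ γ := by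
    exact (le_div_iff₀ hdenpos).mp hηsmall
  -- descent lemma
  have hkey := descent_lb f f' θ θ' L hL hdiff
    (fun x hx => hlip x hx θ (left_mem_segment ℝ θ θ'))
  have hwval : θ' - θ = δ - η • v := by rw [hθ']; abel
  have hwnorm : ‖θ' - θ‖ ≤ (1 + lam) * η * ‖v‖ := by
    rw [hwval]
    calc ‖δ - η • v‖ ≤ ‖δ‖ + ‖η • v‖ := norm_sub_le _ _
      _ ≤ lam * η * ‖v‖ + η * ‖v‖ := by
          rw [norm_smul, Real.norm_eq_abs, abs_of_pos hη]
          linarith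
      _ = (1 + lam) * η * ‖v‖ := by ring
  have hinner : (inner ℝ (f' θ) (θ' - θ) : ℝ) ≥ η * γ - lam * η * ‖u‖ * ‖v‖ := by
    rw [hwval, ← hu, inner_sub_right, inner_smul_right]
    have h1 : (inner ℝ u δ : ℝ) ≥ -(‖u‖ * ‖δ‖) := by
      have ha := abs_real_inner_le_norm u δ
      have hb := neg_abs_le (inner ℝ u δ : ℝ)
      linarith
    have h2 : ‖u‖ * ‖δ‖ ≤ ‖u‖ * (lam * η * ‖v‖) :=
      mul_le_mul_of_nonneg_left hδ (norm_nonneg u)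
    have h3 : (inner ℝ u v : ℝ) = -γ := by rw [hγ]; ring
    rw [h3]
    have h4 : ‖u‖ * (lam * η * ‖v‖) = lam * η * ‖u‖ * ‖v‖ := by ring
    rw [h4] at h2
    have : (inner ℝ u δ : ℝ) ≥ -(lam * η * ‖u‖ * ‖v‖) := by linarith
    linarith
  have hsq : ‖θ' - θ‖ ^ 2 ≤ ((1 + lam) * η * ‖v‖) ^ 2 := by
    have := norm_nonneg (θ' - θ)
    nlinarith
  have hLterm : L / 2 * ‖θ' - θ‖ ^ 2 ≤ η * γ / 2 := by
    have h1 : L / 2 * ‖θ' - θ‖ ^ 2 ≤ L / 2 * ((1 + lam) * η * ‖v‖) ^ 2 :=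
      mul_le_mul_of_nonneg_left hsq (by positivity)
    have h2 : L / 2 * ((1 + lam) * η * ‖v‖) ^ 2 = η / 2 * (η * ((1 + lam) ^ 2 * L * ‖v‖ ^ 2)) := by ring
    have h3 : η / 2 * (η * ((1 + lam) ^ 2 * L * ‖v‖ ^ 2)) ≤ η / 2 * γ :=
      mul_le_mul_of_nonneg_left hηγ (by positivity)
    have h4 : η / 2 * γ = η * γ / 2 := by ring
    linarith
  linarith
end
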